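/- If T is a tribracket and X is an entropic tribracket, then the set Hom(T,X) of tribracket homomorphisms is closed under the pointwise operation: for homomorphisms f,g,h: T → X, the map t ↦ [f(t),g(t),h(t)]_X is again a tribracket homomorphism. -/

import Mathlib

structure Tribracket (X : Type*) where
  br : X → X → X → X
  exu_left : ∀ x y z, ∃! a, br a x y = z
  exu_mid : ∀ x y z, ∃! b, br x b y = z
  exu_right : ∀ x y z, ∃! c, br x y c = z
  tri1 : ∀ x y z w, br y (br x y z) (br x y w) = br z (br x y z) (br x z w)
  tri2 : ∀ x y z w, br z (br x y z) (br x z w) = br w (br x y w) (br x z w)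

def Tribracket.IsEntropic {X : Type*} (T : Tribracket X) : Prop :=
  ∀ x y z u v w a b c,
    T.br (T.br x y z) (T.br u v w) (T.br a b c) =
    T.br (T.br x u a) (T.br y v b) (T.br z w c)

def IsTriHom {X Y : Type*} (TX : Tribracket X) (TY : Tribracket Y) (f : X → Y) : Prop :=
  ∀ x y z, f (TX.br x y z) = TY.br (f x) (f y) (f z)

theorem homset_closed_pointwise {T X : Type*} (TT : Tribracket T) (TX : Tribracket X)
    (hX : TX.IsEntropic) (f g h : T → X)
    (hf : IsTriHom TT TX f) (hg : IsTriHom TT TX g) (hh : IsTriHom TT TX h) :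
    IsTriHom TT TX (fun t => TX.br (f t) (g t) (h t)) := by
  intro x y z
  dsimp only
  rw [hf, hg, hh]
  exact hX ..
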